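/- Let d ≥ 1 and let f : ℝ_{>0}^d → ℝ be componentwise subadditive and Lebesgue measurable. Then lim_{n→∞} f(n,…,n)/n^d, taken over positive integers n, exists in ℝ ∪ {−∞} and equals inf_{n ≥ 1} f(n,…,n)/n^d, which in turn equals inf_{x_1,…,x_d > 0} f(x_1,…,x_d)/(x_1⋯x_d). -/

import Mathlib

/-!
Write `n = kᵢ xᵢ + rᵢ` with `kᵢ ∈ ℕ` and remainders `rᵢ ∈ [xᵢ, 2xᵢ]`. Splitting every coordinate
by subadditivity bounds `f(n,…,n)` by `(∏ kᵢ) f(x)` plus `∏ (kᵢ + 1) - ∏ kᵢ = O(n^(d-1))` times an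
upper bound of `f` on the box `[x, 2x]`, so `limsup f(n,…,n)/n^d ≤ f(x)/∏ xᵢ`.

The bound on the box is where measurability enters (a Steinhaus-type argument): outside a set of
small measure in `(0, 2x)` we have `f ≤ M`, so for `t ∈ [x, 2x]` some `s ∈ (0, x)` has all `2^d`
points mixing the coordinates of `s` and `t - s` outside that set, and then
`f(t) = f(s + (t - s)) ≤ 2^d M`.

Finally the diagonal values are among the quotients `f(x)/∏ xᵢ`, so
`liminf ≥ inf over n ≥ inf over x ≥ limsup`.
-/

open Filter MeasureTheory Topology

def ComponentwiseSubadditive {ι : Type*} [DecidableEq ι] (f : (ι → ℝ) → ℝ) : Prop :=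
  ∀ (i : ι) (x : ι → ℝ) (y : ℝ), (∀ j, 0 < x j) → 0 < y →
    f (Function.update x i (x i + y)) ≤ f x + f (Function.update x i y)

lemma forall_pos_piecewise {ι : Type*} {x y : ι → ℝ} (hx : ∀ i, 0 < x i) (hy : ∀ i, 0 < y i)
    (S : Finset ι) [∀ i, Decidable (i ∈ S)] : ∀ i, 0 < S.piecewise x y i := fun i =>
  S.piecewise_cases x y (fun z => 0 < z) (hx i) (hy i)

lemma forall_pos_update {ι : Type*} [DecidableEq ι] {x : ι → ℝ} (hx : ∀ i, 0 < x i) (a : ι)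
    {y : ℝ} (hy : 0 < y) : ∀ i, 0 < Function.update x a y i :=
  (Function.forall_update_iff x fun _ z => 0 < z).2 ⟨hy, fun i _ => hx i⟩

namespace ComponentwiseSubadditive

open Finset Function

variable {ι : Type*} [DecidableEq ι] {f : (ι → ℝ) → ℝ}

theorem update_natCast_mul_add_le (hf : ComponentwiseSubadditive f) {x : ι → ℝ}
    (hx : ∀ j, 0 < x j) (i : ι) {y r : ℝ} (hy : 0 < y) (hr : 0 < r) (k : ℕ) :
    f (update x i (k * y + r)) ≤ k * f (update x i y) + f (update x i r) := by
  induction k with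
  | zero => simp
  | succ k ih =>
    have hstep := hf i (update x i (k * y + r)) y (forall_pos_update hx i (by positivity)) hy
    simp only [update_self, update_idem] at hstep
    calc f (update x i ((k + 1 : ℕ) * y + r)) = f (update x i (k * y + r + y)) := by
          push_cast; ring_nf
      _ ≤ _ := hstep
      _ ≤ (k + 1 : ℕ) * f (update x i y) + f (update x i r) := by push_cast; linarith

theorem piecewise_le_sum_powerset (hf : ComponentwiseSubadditive f) (k : ι → ℕ) {x r : ι → ℝ}
    (hx : ∀ i, 0 < x i) (hr : ∀ i, 0 < r i) (T : Finset ι) {w : ι → ℝ} (hw : ∀ i, 0 < w i) :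
    f (T.piecewise (fun i => k i * x i + r i) w) ≤
      ∑ S ∈ T.powerset, (∏ i ∈ S, (k i : ℝ)) * f (T.piecewise (S.piecewise x r) w) := by
  induction T using Finset.induction_on generalizing w with
  | empty => simp
  | @insert a T ha ih =>
    have hkxr : 0 < k a * x a + r a := by have := hx a; have := hr a; positivity
    rw [piecewise_insert, Finset.update_piecewise_of_notMem (hi := ha), sum_powerset_insert ha,
      ← sum_add_distrib]
    refine (ih (forall_pos_update hw a hkxr)).trans (sum_le_sum fun S hS => ?_)
    have haS : a ∉ S := fun h => ha (mem_powerset.1 hS h)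
    set p := T.piecewise (S.piecewise x r) w
    have hp : ∀ i, 0 < p i := forall_pos_piecewise (forall_pos_piecewise hx hr S) hw T
    have hsplit := hf.update_natCast_mul_add_le hp a (hx a) (hr a) (k a)
    have hp_r : (insert a T).piecewise (S.piecewise x r) w = update p a (r a) := by
      rw [piecewise_insert, piecewise_eq_of_notMem _ _ _ haS]
    have hp_x : (insert a T).piecewise ((insert a S).piecewise x r) w = update p a (x a) := by
      ext i
      rcases eq_or_ne i a with rfl | hia
      · simp
      · by_cases hiT : i ∈ T <;> simp [p, hia, hiT]
    rw [← Finset.update_piecewise_of_notMem (hi := ha), hp_r, hp_x, prod_insert haS]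
    have hprod : 0 ≤ ∏ i ∈ S, (k i : ℝ) := by positivity
    linarith [mul_le_mul_of_nonneg_left hsplit hprod]

variable [Fintype ι]

theorem le_sum_piecewise (hf : ComponentwiseSubadditive f) (k : ι → ℕ) {x r : ι → ℝ}
    (hx : ∀ i, 0 < x i) (hr : ∀ i, 0 < r i) :
    f (fun i => k i * x i + r i) ≤
      ∑ S : Finset ι, (∏ i ∈ S, (k i : ℝ)) * f (S.piecewise x r) := by
  simpa using hf.piecewise_le_sum_powerset k hx hr univ hr

theorem le_prod_mul_add_of_piecewise_le (hf : ComponentwiseSubadditive f) (k : ι → ℕ)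
    {x r : ι → ℝ} (hx : ∀ i, 0 < x i) (hr : ∀ i, 0 < r i) {C : ℝ}
    (hC : ∀ S : Finset ι, S ≠ univ → f (S.piecewise x r) ≤ C) :
    f (fun i => k i * x i + r i) ≤
      (∏ i, (k i : ℝ)) * f x + (∏ i, ((k i : ℝ) + 1) - ∏ i, (k i : ℝ)) * C := by
  calc f (fun i => k i * x i + r i)
      ≤ ∑ S : Finset ι, (∏ i ∈ S, (k i : ℝ)) * f (S.piecewise x r) :=
        hf.le_sum_piecewise k hx hr
    _ ≤ ∑ S : Finset ι, ((∏ i ∈ S, (k i : ℝ)) * C +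
          if S = univ then (∏ i, (k i : ℝ)) * (f x - C) else 0) := by
        gcongr with S
        split_ifs with hS
        · subst hS
          rw [piecewise_univ]
          linarith
        · simpa using mul_le_mul_of_nonneg_left (hC S hS) (by positivity)
    _ = _ := by
        rw [sum_add_distrib, ← sum_mul, ← powerset_univ, ← prod_add_one, sum_ite_eq']
        simp only [mem_powerset, subset_refl, if_true]
        ring

end ComponentwiseSubadditive

namespace MeasureTheory

theorem tendsto_measure_setOf_lt_atTop {α : Type*} [MeasurableSpace α] {μ : Measure α}
    [IsFiniteMeasure μ] {g : α → ℝ} (hg : AEMeasurable g μ) :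
    Tendsto (fun M : ℝ => μ {y | M < g y}) atTop (𝓝 0) := by
  have h := tendsto_measure_iInter_atTop (μ := μ) (s := fun M : ℝ => {y | M < g y})
    (fun _ => nullMeasurableSet_lt aemeasurable_const hg)
    (fun _ _ hMN _ hy => lt_of_le_of_lt hMN hy) ⟨0, measure_ne_top _ _⟩
  have hempty : ⋂ M : ℝ, {y | M < g y} = ∅ :=
    Set.eq_empty_of_forall_notMem fun y hy => lt_irrefl (g y) (Set.mem_iInter.1 hy (g y))
  rwa [hempty, measure_empty] at h

theorem exists_mem_forall_apply_notMem {α β J : Type*} [MeasurableSpace α] [MeasurableSpace β]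
    [Fintype J] {μ : Measure α} {ν : Measure β} {φ : J → α → β}
    (hφ : ∀ j, MeasurePreserving (φ j) μ ν) {D : Set α} {E : Set β}
    (hE : ν E * Fintype.card J < μ D) : ∃ s ∈ D, ∀ j, φ j s ∉ E := by
  by_contra! hcover
  have hD : D ⊆ ⋃ j, φ j ⁻¹' E := fun s hs => Set.mem_iUnion.2 (hcover s hs)
  refine hE.not_ge ?_
  calc μ D ≤ ∑ j, μ (φ j ⁻¹' E) := (measure_mono hD).trans (measure_iUnion_fintype_le _ _)
    _ ≤ ∑ _j : J, ν E := Finset.sum_le_sum fun j _ => (hφ j).measure_preimage_le E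
    _ = ν E * Fintype.card J := by simp [mul_comm]

theorem measurePreserving_piecewise_sub {ι : Type*} [Fintype ι] (S : Finset ι)
    [DecidablePred (· ∈ S)] (t : ι → ℝ) :
    MeasurePreserving (fun s : ι → ℝ => S.piecewise s (t - s)) := by
  have hcoord : ∀ i, MeasurePreserving (fun y : ℝ => if i ∈ S then y else t i - y) := fun i => by
    split_ifs
    exacts [MeasurePreserving.id volume, Measure.measurePreserving_sub_left volume (t i)]
  exact volume_preserving_pi hcoord

end MeasureTheory

theorem sub_natFloor_div_sub_one_mul_mem_Icc {a x : ℝ} (hx : 0 < x) (hxa : x ≤ a) :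
    a - ((⌊a / x⌋₊ - 1 : ℕ) : ℝ) * x ∈ Set.Icc x (2 * x) := by
  have hm : 1 ≤ ⌊a / x⌋₊ := Nat.le_floor (by simpa [one_le_div hx] using hxa)
  have hlo : (⌊a / x⌋₊ : ℝ) * x ≤ a :=
    (le_div_iff₀ hx).1 (Nat.floor_le (div_nonneg (hx.le.trans hxa) hx.le))
  have hhi : a < ((⌊a / x⌋₊ : ℝ) + 1) * x := (div_lt_iff₀ hx).1 (Nat.lt_floor_add_one _)
  rw [Nat.cast_sub hm, Nat.cast_one]
  constructor <;> nlinarith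

theorem tendsto_natFloor_div_sub_one_div {x : ℝ} (hx : 0 < x) :
    Tendsto (fun n : ℕ => ((⌊n / x⌋₊ - 1 : ℕ) : ℝ) / n) atTop (𝓝 x⁻¹) := by
  have hlim := ((tendsto_nat_floor_mul_div_atTop (inv_nonneg.2 hx.le)).comp
    tendsto_natCast_atTop_atTop).sub (tendsto_one_div_atTop_nhds_zero_nat (𝕜 := ℝ))
  rw [sub_zero] at hlim
  refine hlim.congr' ?_
  filter_upwards [tendsto_natCast_atTop_atTop.eventually_ge_atTop x] with n hn
  have hm : 1 ≤ ⌊x⁻¹ * n⌋₊ := Nat.le_floor (by simpa [← div_eq_inv_mul, one_le_div hx] using hn)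
  simp only [Function.comp_apply, div_eq_inv_mul (n : ℝ) x]
  rw [Nat.cast_sub hm, Nat.cast_one, sub_div]

namespace ComponentwiseSubadditive

open Finset

variable {ι : Type*} [Fintype ι] [DecidableEq ι] {f : (ι → ℝ) → ℝ}

theorem bddAbove_image_Icc (hf : ComponentwiseSubadditive f)
    (hmeas : AEMeasurable f (volume.restrict {x : ι → ℝ | ∀ i, 0 < x i}))
    {x : ι → ℝ} (hx : ∀ i, 0 < x i) : BddAbove (f '' Set.Icc x (2 • x)) := by
  set B : Set (ι → ℝ) := Set.univ.pi fun i => Set.Ioo 0 (2 * x i)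
  set D : Set (ι → ℝ) := Set.univ.pi fun i => Set.Ioo 0 (x i)
  have hB : MeasurableSet B := MeasurableSet.univ_pi fun _ => measurableSet_Ioo
  have hB_fin : volume B ≠ ⊤ := by simp [B, volume_pi_pi, ENNReal.prod_ne_top, ENNReal.mul_ne_top]
  have hD_pos : volume D ≠ 0 := by simp [D, volume_pi_pi, Finset.prod_ne_zero_iff, hx]
  have : IsFiniteMeasure (volume.restrict B) := isFiniteMeasure_restrict.2 hB_fin
  have hmeasB : AEMeasurable f (volume.restrict B) :=
    hmeas.mono_measure (Measure.restrict_mono (fun y hy i => (hy i trivial).1) le_rfl)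
  obtain ⟨M, hM⟩ : ∃ M : ℝ,
      volume ({y | M < f y} ∩ B) < volume D / Fintype.card (Finset ι) := by
    have hδ : (0 : ENNReal) < volume D / Fintype.card (Finset ι) :=
      ENNReal.div_pos hD_pos (ENNReal.natCast_ne_top _)
    obtain ⟨M, hM⟩ := ((tendsto_measure_setOf_lt_atTop hmeasB).eventually_lt_const hδ).exists
    exact ⟨M, by rwa [Measure.restrict_apply' hB] at hM⟩
  refine ⟨Fintype.card (Finset ι) * M, ?_⟩
  rintro _ ⟨t, ⟨hxt, ht2x⟩, rfl⟩
  obtain ⟨s, hsD, hs⟩ := exists_mem_forall_apply_notMem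
    (fun S => measurePreserving_piecewise_sub S t) (ENNReal.mul_lt_of_lt_div hM)
  have hs_pos : ∀ i, 0 < s i := fun i => (hsD i trivial).1
  have hts_pos : ∀ i, 0 < (t - s) i := fun i => by
    simp only [Pi.sub_apply, sub_pos]
    exact (hsD i trivial).2.trans_le (hxt i)
  have hB_mem : ∀ S : Finset ι, S.piecewise s (t - s) ∈ B := fun S i _ => by
    refine S.piecewise_cases s (t - s) (· ∈ Set.Ioo 0 (2 * x i)) ?_ ?_
    · exact ⟨hs_pos i, (hsD i trivial).2.trans (by linarith [hx i])⟩
    · have := ht2x i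
      simp only [Pi.smul_apply, nsmul_eq_mul, Nat.cast_ofNat] at this
      exact ⟨hts_pos i, by simp only [Pi.sub_apply]; linarith [hs_pos i]⟩
  calc f t = f (fun i => ((1 : ℕ) : ℝ) * s i + (t - s) i) := by simp
    _ ≤ ∑ S : Finset ι, (∏ i ∈ S, ((1 : ℕ) : ℝ)) * f (S.piecewise s (t - s)) :=
      hf.le_sum_piecewise (fun _ => 1) hs_pos hts_pos
    _ ≤ ∑ _S : Finset ι, M := sum_le_sum fun S _ => by
      simpa using fun hlt => hs S ⟨hlt, hB_mem S⟩
    _ = Fintype.card (Finset ι) * M := by simp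

theorem limsup_diag_le (hf : ComponentwiseSubadditive f)
    (hmeas : AEMeasurable f (volume.restrict {x : ι → ℝ | ∀ i, 0 < x i}))
    {x : ι → ℝ} (hx : ∀ i, 0 < x i) :
    limsup (fun n : ℕ => ((f (fun _ => (n : ℝ)) / (n : ℝ) ^ Fintype.card ι : ℝ) : EReal)) atTop ≤
      ((f x / ∏ i, x i : ℝ) : EReal) := by
  obtain ⟨C, hC⟩ := hf.bddAbove_image_Icc hmeas hx
  set k : ℕ → ι → ℕ := fun n i => ⌊(n : ℝ) / x i⌋₊ - 1
  set G : ℕ → ℝ := fun n => (∏ i, (k n i : ℝ) / n) * f x +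
    (∏ i, ((k n i : ℝ) + 1) / n - ∏ i, (k n i : ℝ) / n) * C
  have hk : ∀ i, Tendsto (fun n : ℕ => (k n i : ℝ) / n) atTop (𝓝 (x i)⁻¹) :=
    fun i => tendsto_natFloor_div_sub_one_div (hx i)
  have hk₁ : ∀ i, Tendsto (fun n : ℕ => ((k n i : ℝ) + 1) / n) atTop (𝓝 (x i)⁻¹) := fun i => by
    simpa [add_div] using (hk i).add (tendsto_one_div_atTop_nhds_zero_nat (𝕜 := ℝ))
  have hG : Tendsto G atTop (𝓝 (f x / ∏ i, x i)) := by
    have hP := tendsto_finsetProd univ fun i _ => hk i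
    have hQ := tendsto_finsetProd univ fun i _ => hk₁ i
    simpa [G, div_eq_inv_mul, prod_inv_distrib] using
      (hP.mul_const (f x)).add ((hQ.sub hP).mul_const C)
  have hle : ∀ᶠ n : ℕ in atTop, f (fun _ => (n : ℝ)) / (n : ℝ) ^ Fintype.card ι ≤ G n := by
    filter_upwards [eventually_ge_atTop 1,
      eventually_all.2 fun i => tendsto_natCast_atTop_atTop.eventually_ge_atTop (x i)] with n hn hxn
    set r : ι → ℝ := fun i => n - k n i * x i
    have hr : ∀ i, r i ∈ Set.Icc (x i) (2 * x i) :=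
      fun i => sub_natFloor_div_sub_one_mul_mem_Icc (hx i) (hxn i)
    have hmem : ∀ S : Finset ι, S.piecewise x r ∈ Set.Icc x (2 • x) := fun S =>
      ⟨fun i => S.piecewise_cases x r (x i ≤ ·) le_rfl (hr i).1,
        fun i => S.piecewise_cases x r (· ≤ (2 • x) i) (by simp [two_mul, (hx i).le])
          (by simpa using (hr i).2)⟩
    have hbound := hf.le_prod_mul_add_of_piecewise_le (k n) hx (fun i => (hx i).trans_le (hr i).1)
      (C := C) fun S _ => hC ⟨_, hmem S, rfl⟩
    have hdiag : (fun i => (k n i : ℝ) * x i + r i) = fun _ => (n : ℝ) := by ext; simp [r]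
    rw [hdiag] at hbound
    calc f (fun _ => (n : ℝ)) / (n : ℝ) ^ Fintype.card ι
        ≤ ((∏ i, (k n i : ℝ)) * f x + (∏ i, ((k n i : ℝ) + 1) - ∏ i, (k n i : ℝ)) * C) /
          (n : ℝ) ^ Fintype.card ι := div_le_div_of_nonneg_right hbound (by positivity)
      _ = G n := by
        simp only [G, prod_div_distrib, prod_const, card_univ]
        ring
  calc limsup (fun n : ℕ => ((f (fun _ => (n : ℝ)) / (n : ℝ) ^ Fintype.card ι : ℝ) : EReal)) atTop
      ≤ limsup (fun n => (G n : EReal)) atTop :=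
        limsup_le_limsup (hle.mono fun _ h => EReal.coe_le_coe_iff.2 h)
    _ = _ := ((continuous_coe_real_ereal.tendsto _).comp hG).limsup_eq

end ComponentwiseSubadditive

theorem fekete_lemma_along_diagonal_general
    (d : ℕ) (f : (Fin d → ℝ) → ℝ)
    (hf : ∀ (i : Fin d) (x : Fin d → ℝ) (y : ℝ), (∀ j, 0 < x j) → 0 < y →
      f (Function.update x i (x i + y)) ≤ f x + f (Function.update x i y))
    (hmeas : AEMeasurable f (volume.restrict {x : Fin d → ℝ | ∀ i, 0 < x i})) :
    Tendsto (fun n : ℕ =>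
        ((f (fun _ => (n : ℝ)) / (n : ℝ) ^ d : ℝ) : EReal)) atTop
      (𝓝 (⨅ n ∈ {n : ℕ | 1 ≤ n},
        ((f (fun _ => (n : ℝ)) / (n : ℝ) ^ d : ℝ) : EReal))) ∧
    (⨅ n ∈ {n : ℕ | 1 ≤ n},
        ((f (fun _ => (n : ℝ)) / (n : ℝ) ^ d : ℝ) : EReal)) =
      (⨅ x ∈ {x : Fin d → ℝ | ∀ i, 0 < x i}, ((f x / ∏ i, x i : ℝ) : EReal)) := by
  set a : ℕ → EReal := fun n => ((f (fun _ => (n : ℝ)) / (n : ℝ) ^ d : ℝ) : EReal)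
  set L := ⨅ n ∈ {n : ℕ | 1 ≤ n}, a n
  set I := ⨅ x ∈ {x : Fin d → ℝ | ∀ i, 0 < x i}, ((f x / ∏ i, x i : ℝ) : EReal)
  have hlimsup : limsup a atTop ≤ I := le_iInf₂ fun x hx => by
    simpa using ComponentwiseSubadditive.limsup_diag_le hf hmeas hx
  have hIL : I ≤ L := le_iInf₂ fun n (hn : 1 ≤ n) => by
    have hpos : ∀ i : Fin d, (0 : ℝ) < n := fun _ => by exact_mod_cast hn
    refine (iInf₂_le (fun _ => (n : ℝ)) hpos).trans_eq ?_
    simp [a]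
  have hliminf : L ≤ liminf a atTop :=
    le_liminf_of_le (by isBoundedDefault) ((eventually_ge_atTop 1).mono fun n hn => iInf₂_le n hn)
  exact ⟨tendsto_of_le_liminf_of_limsup_le hliminf (hlimsup.trans hIL),
    le_antisymm (hliminf.trans (le_trans liminf_le_limsup hlimsup)) hIL⟩

/-- Let `f` be componentwise subadditive and Lebesgue measurable on the positive
orthant of `ℝ^d`.  Then `f(n,…,n)/n^d`, taken over positive integers `n`, converges
in `ℝ ∪ {−∞}` to `inf_{n ≥ 1} f(n,…,n)/n^d`, which in turn equals
`inf_{x₁,…,x_d > 0} f(x₁,…,x_d)/(x₁⋯x_d)`. -/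
theorem fekete_lemma_along_diagonal
    (d : ℕ) (hd : 1 ≤ d) (f : (Fin d → ℝ) → ℝ)
    (hf : ∀ (i : Fin d) (x : Fin d → ℝ) (y : ℝ), (∀ j, 0 < x j) → 0 < y →
      f (Function.update x i (x i + y)) ≤ f x + f (Function.update x i y))
    (hmeas : AEMeasurable f (volume.restrict {x : Fin d → ℝ | ∀ i, 0 < x i})) :
    Tendsto (fun n : ℕ =>
        ((f (fun _ => (n : ℝ)) / (n : ℝ) ^ d : ℝ) : EReal)) atTop
      (𝓝 (⨅ n ∈ {n : ℕ | 1 ≤ n},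
        ((f (fun _ => (n : ℝ)) / (n : ℝ) ^ d : ℝ) : EReal))) ∧
    (⨅ n ∈ {n : ℕ | 1 ≤ n},
        ((f (fun _ => (n : ℝ)) / (n : ℝ) ^ d : ℝ) : EReal)) =
      (⨅ x ∈ {x : Fin d → ℝ | ∀ i, 0 < x i}, ((f x / ∏ i, x i : ℝ) : EReal)) :=
  fekete_lemma_along_diagonal_general d f hf hmeas
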